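/- If γ is an accepting strategy word for a 2AFW A on a word w, then the cycle annotation η — where η(j) consists of all triples (q,f,q') such that some path segment of γ starts at (j,q), ends at (j,q'), has length > 1, and f = 1 exactly when the segment visits an accepting state excluding its first state — is an accepting annotation of γ. -/

import Mathlib

/-- Positive Boolean formulas over `X` (with `true` and `false`, no negation). -/
inductive PBF (X : Type) where
  | tru : PBF X
  | fls : PBF X
  | var : X → PBF X
  | conj : PBF X → PBF X → PBF X
  | disj : PBF X → PBF X → PBF X

/-- A set `M ⊆ X` satisfies a positive Boolean formula. -/
def PBF.satBy {X : Type} (M : Set X) : PBF X → Prop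
  | .tru => True
  | .fls => False
  | .var x => x ∈ M
  | .conj a b => a.satBy M ∧ b.satBy M
  | .disj a b => a.satBy M ∨ b.satBy M

/-- Directions of a two-way automaton: −1, 0, 1. -/
inductive Dir where
  | back : Dir
  | stay : Dir
  | fwd : Dir
deriving DecidableEq

/-- Applying a direction to a position (undefined when moving left of 0). -/
def Dir.apply : Dir → ℕ → Option ℕ
  | .back, 0 => none
  | .back, i + 1 => some i
  | .stay, i => some i
  | .fwd, i => some (i + 1)

/-- A two-way alternating automaton on finite words `(Q, Σ, δ, q₀, F)`. -/
structure TAFW (Q A : Type) where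
  delta : Q → A → PBF (Q × Dir)
  start : Q
  acc : Set Q

/-- Configurations of a 2AFW: a state with a read position, or `Accept`. -/
inductive Config (Q : Type) where
  | conf : Q → ℕ → Config Q
  | accept : Config Q

variable {Q A : Type}

/-- `ρ` (a partial labelling of the tree of finite index sequences) is a run of
the 2AFW `M` on `w` from position `k`. -/
structure IsRun (M : TAFW Q A) (w : List A) (k : ℕ)
    (ρ : List ℕ → Option (Config Q)) : Prop where
  root : ρ [] = some (.conf M.start k)
  tree : ∀ x n, (ρ (x ++ [n])).isSome → (ρ x).isSome
  accept_leaf : ∀ x, ρ x = some .accept → ∀ n, ρ (x ++ [n]) = none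
  node : ∀ x q i, ρ x = some (.conf q i) → ∃ a, w[i]? = some a ∧
    ((M.delta q a = .fls ∧ ∀ n, ρ (x ++ [n]) = none) ∨
     (M.delta q a = .tru ∧ (∃ n, ρ (x ++ [n]) = some .accept) ∧
        ∀ n c, ρ (x ++ [n]) = some c → c = .accept) ∨
     (M.delta q a ≠ .tru ∧ M.delta q a ≠ .fls ∧
       ∃ S : Set (Q × Dir), (M.delta q a).satBy S ∧
         (∀ τ ∈ S, ∃ n j, τ.2.apply i = some j ∧ ρ (x ++ [n]) = some (.conf τ.1 j)) ∧
         (∀ n c, ρ (x ++ [n]) = some c →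
            ∃ τ ∈ S, ∃ j, τ.2.apply i = some j ∧ c = .conf τ.1 j)))

/-- A leaf of the run tree. -/
def IsLeaf (ρ : List ℕ → Option (Config Q)) (x : List ℕ) : Prop :=
  (ρ x).isSome ∧ ∀ n, ρ (x ++ [n]) = none

/-- An infinite branch of the run tree, given by successive child indices. -/
def InfBranch (ρ : List ℕ → Option (Config Q)) (b : ℕ → ℕ) : Prop :=
  ∀ n, (ρ ((List.range n).map b)).isSome

/-- A run is accepting when every finite branch ends in `Accept` and every
infinite branch has some accepting state occurring infinitely often. -/
def AcceptingRun (M : TAFW Q A) (w : List A) (k : ℕ)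
    (ρ : List ℕ → Option (Config Q)) : Prop :=
  IsRun M w k ρ ∧
  (∀ x, IsLeaf ρ x → ρ x = some .accept) ∧
  (∀ b, InfBranch ρ b →
    ∃ f ∈ M.acc, ∀ N, ∃ n ≥ N, ∃ i, ρ ((List.range n).map b) = some (.conf f i))

/-- The 2AFW `M` accepts `w` from position `k`. -/
def TAFW.Accepts (M : TAFW Q A) (w : List A) (k : ℕ) : Prop :=
  ∃ ρ, AcceptingRun M w k ρ
variable {Q A : Type}

/-- Origin states of a label of a strategy word. -/
def originSet (l : Set (Q × Dir × Q)) : Set Q := {q | ∃ d q', (q, d, q') ∈ l}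

/-- `γ` is a strategy word for the 2AFW `M` on the input word `w`. -/
structure StrategyOn (M : TAFW Q A) (w : List A) (γ : ℕ → Set (Q × Dir × Q)) : Prop where
  init : M.start ∈ originSet (γ 0)
  no_back0 : ∀ t ∈ γ 0, t.2.1 ≠ Dir.back
  no_fwd_last : ∀ t ∈ γ (w.length - 1), t.2.1 ≠ Dir.fwd
  trans_sat : ∀ u, u < w.length → ∀ q ∈ originSet (γ u), ∀ a, w[u]? = some a →
    (M.delta q a).satBy {τ : Q × Dir | (q, τ.2, τ.1) ∈ γ u}

/-- One step between (position, state) pairs following a transition of `γ`. -/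
def PathStep (γ : ℕ → Set (Q × Dir × Q)) (c c' : ℕ × Q) : Prop :=
  ∃ d, (c.2, d, c'.2) ∈ γ c.1 ∧ d.apply c.1 = some c'.1

/-- A (maximal) finite path in the strategy word `γ`. -/
def IsFinPath (w : List A) (γ : ℕ → Set (Q × Dir × Q)) (β : List (ℕ × Q)) : Prop :=
  β ≠ [] ∧ (∀ e ∈ β, e.1 < w.length) ∧
  (∀ m, ∀ h : m + 1 < β.length,
    PathStep γ (β.get ⟨m, by omega⟩) (β.get ⟨m + 1, h⟩)) ∧
  (∀ l, β.getLast? = some l → ¬ ∃ c', PathStep γ l c')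

/-- A finite path is accepting when the transition formula at its final
configuration is `true`. -/
def FinPathAccepting (M : TAFW Q A) (w : List A) (β : List (ℕ × Q)) : Prop :=
  ∀ l, β.getLast? = some l → ∀ a, w[l.1]? = some a → M.delta l.2 a = PBF.tru

/-- An infinite path in the strategy word `γ`. -/
def IsInfPath (γ : ℕ → Set (Q × Dir × Q)) (β : ℕ → ℕ × Q) : Prop :=
  ∀ n, PathStep γ (β n) (β (n + 1))

/-- An infinite path is accepting when some accepting state occurs infinitely
often in it. -/
def InfPathAccepting (M : TAFW Q A) (β : ℕ → ℕ × Q) : Prop :=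
  ∃ f ∈ M.acc, ∀ N, ∃ n ≥ N, (β n).2 = f

/-- An accepting strategy word: all of its paths are accepting. -/
def AcceptingStrategy (M : TAFW Q A) (w : List A) (γ : ℕ → Set (Q × Dir × Q)) : Prop :=
  StrategyOn M w γ ∧
  (∀ β, IsFinPath w γ β → FinPathAccepting M w β) ∧
  (∀ β, IsInfPath γ β → InfPathAccepting M β)
/-- `final(q)`: `true` iff `q` is an accepting state. -/
noncomputable def finalB (M : TAFW Q A) (q : Q) : Bool :=
  @decide (q ∈ M.acc) (Classical.dec _)

/-- `η` is an annotation of the strategy word `γ` (closure conditions 1–4). -/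
structure IsAnnotation (M : TAFW Q A) (w : List A) (γ : ℕ → Set (Q × Dir × Q))
    (η : ℕ → Set (Q × Bool × Q)) : Prop where
  c1 : ∀ u < w.length, ∀ q q', (q, Dir.stay, q') ∈ γ u →
        (q, finalB M q', q') ∈ η u
  c2 : ∀ u, u + 1 < w.length → ∀ q q' q'', (q, Dir.fwd, q') ∈ γ u →
        (q', Dir.back, q'') ∈ γ (u + 1) →
        (q, finalB M q' || finalB M q'', q'') ∈ η u
  c3 : ∀ u, 0 < u → u < w.length → ∀ q q' q'', (q, Dir.back, q') ∈ γ u →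
        (q', Dir.fwd, q'') ∈ γ (u - 1) →
        (q, finalB M q' || finalB M q'', q'') ∈ η u
  c4 : ∀ u < w.length, ∀ q f₁ q' f₂ q'', (q, f₁, q') ∈ η u → (q', f₂, q'') ∈ η u →
        (q, f₁ || f₂, q'') ∈ η u

/-- An annotation is accepting if it has no element of the form `(q,0,q)`. -/
def AnnAccepting (w : List A) (η : ℕ → Set (Q × Bool × Q)) : Prop :=
  ∀ u < w.length, ∀ q : Q, (q, false, q) ∉ η u

/-- A path segment of `γ`: consecutive elements are linked by transitions. -/
def IsSeg {Q : Type} (γ : ℕ → Set (Q × Dir × Q)) (β : List (ℕ × Q)) : Prop :=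
  ∀ m, ∀ h : m + 1 < β.length, PathStep γ (β.get ⟨m, by omega⟩) (β.get ⟨m + 1, h⟩)

/-- The cycle annotation of a strategy word `γ`: `(q,f,q') ∈ η(j)` iff some
path segment of `γ` of length > 1 starts at `(j,q)`, ends at `(j,q')`, and
`f = 1` exactly when it visits an accepting state (excluding its first
element). -/
def cycAnn {Q A : Type} (M : TAFW Q A) (γ : ℕ → Set (Q × Dir × Q)) :
    ℕ → Set (Q × Bool × Q) := fun j =>
  {t | ∃ β : List (ℕ × Q), IsSeg γ β ∧ 2 ≤ β.length ∧
    β.head? = some (j, t.1) ∧ β.getLast? = some (j, t.2.2) ∧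
    (t.2.1 = true ↔ ∃ m, ∃ h : m < β.length, 0 < m ∧ (β.get ⟨m, h⟩).2 ∈ M.acc)}

/-!
Each closure condition of an annotation is witnessed by a path segment of `γ`: one or two
transitions for conditions 1–3, and the concatenation of two segments for condition 4, so the
cycle annotation is an annotation of every strategy word. A triple `(q, 0, q)` at position `j`
would be a closed segment avoiding `F` after its first element; running around it forever gives
an infinite path of `γ` that never visits `F`, which an accepting strategy word does not have.
-/

namespace List

variable {α : Type*} {R : α → α → Prop}

theorem IsChain.append_of_getLast?_eq {l₁ l₂ : List α} {b : α} (h₁ : l₁.IsChain R)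
    (h₂ : (b :: l₂).IsChain R) (hb : l₁.getLast? = some b) : (l₁ ++ l₂).IsChain R :=
  h₁.append h₂.tail fun x hx y hy => by
    rw [hb, Option.mem_some_iff] at hx
    exact hx ▸ h₂.rel_head? hy

theorem IsChain.exists_forall_rel_succ_of_getLast?_eq {l : List α} {a : α}
    (h : (a :: l).IsChain R) (ha : l.getLast? = some a) :
    ∃ f : ℕ → α, (∀ n, R (f n) (f (n + 1))) ∧ ∀ n, f n ∈ l := by
  have hpos : 0 < l.length := length_pos_iff.2 (ne_nil_of_mem (mem_of_getLast? ha))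
  refine ⟨fun n => l[n % l.length]'(Nat.mod_lt _ hpos), fun n => ?_, fun n => getElem_mem _⟩
  have hmod := Nat.mod_lt n hpos
  rcases Nat.lt_or_ge (n % l.length + 1) l.length with hlt | hge
  · have hsucc : (n + 1) % l.length = n % l.length + 1 := by
      rw [← Nat.mod_add_mod, Nat.mod_eq_of_lt hlt]
    have hrel := h.getElem (n % l.length + 1) (by simp; omega)
    simp only [getElem_cons_succ] at hrel
    simpa only [hsucc] using hrel
  · have hlast : n % l.length = l.length - 1 := by omega
    have hzero : (n + 1) % l.length = 0 := by
      rw [← Nat.mod_add_mod, hlast, Nat.sub_add_cancel hpos, Nat.mod_self]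
    have hend : l[l.length - 1] = a := by
      rw [getLast?_eq_getElem?, getElem?_eq_getElem (by omega)] at ha
      exact Option.some_inj.1 ha
    simpa [hlast, hzero, hend] using h.getElem 0 (by simp; omega)

end List

theorem isSeg_iff_isChain {γ : ℕ → Set (Q × Dir × Q)} {β : List (ℕ × Q)} :
    IsSeg γ β ↔ β.IsChain (PathStep γ) := by
  simp [IsSeg, List.isChain_iff_getElem]

theorem finalB_eq_true_iff {M : TAFW Q A} {q : Q} : finalB M q = true ↔ q ∈ M.acc := by
  simp [finalB]

theorem mem_cycAnn_iff {M : TAFW Q A} {γ : ℕ → Set (Q × Dir × Q)} {j : ℕ} {q q' : Q}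
    {f : Bool} :
    (q, f, q') ∈ cycAnn M γ j ↔ ∃ l : List (ℕ × Q), ((j, q) :: l).IsChain (PathStep γ) ∧
      l.getLast? = some (j, q') ∧ (f = true ↔ ∃ c ∈ l, c.2 ∈ M.acc) := by
  have hvisit : ∀ l : List (ℕ × Q), (∃ m, ∃ h : m < ((j, q) :: l).length,
      0 < m ∧ (((j, q) :: l).get ⟨m, h⟩).2 ∈ M.acc) ↔ ∃ c ∈ l, c.2 ∈ M.acc := by
    intro l
    constructor
    · rintro ⟨_ | m, hm, hpos, hacc⟩
      · exact absurd hpos (lt_irrefl 0)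
      · exact ⟨_, List.getElem_mem (by simpa using hm), hacc⟩
    · rintro ⟨c, hc, hacc⟩
      obtain ⟨m, hm, rfl⟩ := List.getElem_of_mem hc
      exact ⟨m + 1, by simpa using hm, m.succ_pos, hacc⟩
  constructor
  · rintro ⟨_ | ⟨a, _ | ⟨b, l⟩⟩, hseg, hlen, hhead, hlast, hflag⟩
    · simp at hlen
    · simp at hlen
    obtain rfl : a = (j, q) := by simpa using hhead
    exact ⟨b :: l, isSeg_iff_isChain.1 hseg, by simpa only [List.getLast?_cons_cons] using hlast,
      hflag.trans (hvisit _)⟩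
  · rintro ⟨l, hchain, hlast, hflag⟩
    have hl : l ≠ [] := List.ne_nil_of_mem (List.mem_of_getLast? hlast)
    refine ⟨(j, q) :: l, isSeg_iff_isChain.2 hchain, ?_, rfl, ?_, hflag.trans (hvisit l).symm⟩
    · simpa [Nat.one_le_iff_ne_zero] using hl
    · simp [List.getLast?_cons, hlast]

section CycAnn

variable {M : TAFW Q A} {γ : ℕ → Set (Q × Dir × Q)} {j : ℕ}

theorem mem_cycAnn_of_pathStep {q q' : Q} (h : PathStep γ (j, q) (j, q')) :
    (q, finalB M q', q') ∈ cycAnn M γ j :=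
  mem_cycAnn_iff.2 ⟨[(j, q')], List.isChain_pair.2 h, rfl, by simp [finalB_eq_true_iff]⟩

theorem mem_cycAnn_of_pathStep_pathStep {q q'' : Q} {c : ℕ × Q} (h₁ : PathStep γ (j, q) c)
    (h₂ : PathStep γ c (j, q'')) : (q, finalB M c.2 || finalB M q'', q'') ∈ cycAnn M γ j :=
  mem_cycAnn_iff.2 ⟨[c, (j, q'')], List.isChain_cons_cons.2 ⟨h₁, List.isChain_pair.2 h₂⟩, rfl,
    by simp [finalB_eq_true_iff]⟩

theorem mem_cycAnn_trans {q q' q'' : Q} {f₁ f₂ : Bool} (h₁ : (q, f₁, q') ∈ cycAnn M γ j)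
    (h₂ : (q', f₂, q'') ∈ cycAnn M γ j) : (q, f₁ || f₂, q'') ∈ cycAnn M γ j := by
  obtain ⟨l₁, hchain₁, hlast₁, hflag₁⟩ := mem_cycAnn_iff.1 h₁
  obtain ⟨l₂, hchain₂, hlast₂, hflag₂⟩ := mem_cycAnn_iff.1 h₂
  refine mem_cycAnn_iff.2 ⟨l₁ ++ l₂, hchain₁.append_of_getLast?_eq hchain₂ ?_, ?_, ?_⟩
  · simp [List.getLast?_cons, hlast₁]
  · simp [List.getLast?_append, hlast₂]
  · simp [hflag₁, hflag₂, or_and_right, exists_or]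

theorem cycAnn_isAnnotation (w : List A) : IsAnnotation M w γ (cycAnn M γ) where
  c1 _ _ _ _ h := mem_cycAnn_of_pathStep ⟨.stay, h, rfl⟩
  c2 u _ _ q' _ h₁ h₂ :=
    mem_cycAnn_of_pathStep_pathStep (c := (u + 1, q')) ⟨.fwd, h₁, rfl⟩ ⟨.back, h₂, rfl⟩
  c3 u hu _ _ q' _ h₁ h₂ := by
    obtain ⟨v, rfl⟩ := Nat.exists_eq_add_one_of_ne_zero hu.ne'
    exact mem_cycAnn_of_pathStep_pathStep (c := (v, q')) ⟨.back, h₁, rfl⟩ ⟨.fwd, h₂, rfl⟩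
  c4 _ _ _ _ _ _ _ h₁ h₂ := mem_cycAnn_trans h₁ h₂

theorem false_self_notMem_cycAnn (hinf : ∀ β, IsInfPath γ β → InfPathAccepting M β) (q : Q) :
    (q, false, q) ∉ cycAnn M γ j := by
  intro hmem
  obtain ⟨l, hchain, hlast, hflag⟩ := mem_cycAnn_iff.1 hmem
  obtain ⟨β, hpath, hmemβ⟩ := hchain.exists_forall_rel_succ_of_getLast?_eq hlast
  obtain ⟨f, hf, hinf_often⟩ := hinf β hpath
  obtain ⟨n, -, hn⟩ := hinf_often 0
  exact Bool.false_ne_true (hflag.2 ⟨β n, hmemβ n, hn ▸ hf⟩)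

end CycAnn

/-- if `γ` is an accepting strategy word, the cycle annotation
is an accepting annotation of `γ`. -/
theorem cycle_annotation_accepting {Q A : Type} (M : TAFW Q A) (w : List A)
    (γ : ℕ → Set (Q × Dir × Q)) (hγ : AcceptingStrategy M w γ) :
    IsAnnotation M w γ (cycAnn M γ) ∧ AnnAccepting w (cycAnn M γ) :=
  ⟨cycAnn_isAnnotation w, fun _ _ => false_self_notMem_cycAnn hγ.2.2⟩
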